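/- Let g₁(X) and g₂(Y) be sufficient statistics, i.e., X → g₁(X) → Y and X → g₂(Y) → Y hold. If a random variable U satisfies H(U | X) = 0 and H(U | Y) = 0, then H(U | g₁(X)) = 0 and H(U | g₂(Y)) = 0. -/

import Mathlib

open scoped Classical
open Finset Real

noncomputable section

variable {Ω : Type*} [Fintype Ω]

/-- Pushforward probability of value `x` under random variable `X` w.r.t. pmf `p`. -/
def dist' {α : Type*} (p : Ω → ℝ) (X : Ω → α) (x : α) : ℝ :=
  ∑ ω, if X ω = x then p ω else 0

/-- Shannon entropy, base 2. -/
def ent {α : Type*} [Fintype α] (p : Ω → ℝ) (X : Ω → α) : ℝ :=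
  -∑ x, dist' p X x * Real.logb 2 (dist' p X x)

/-- Conditional entropy `H(X | Y)`. -/
def condEnt {α β : Type*} [Fintype α] [Fintype β] (p : Ω → ℝ) (X : Ω → α) (Y : Ω → β) : ℝ :=
  ent p (fun ω => (X ω, Y ω)) - ent p Y

/-- Mutual information `I(X ∧ Y)`. -/
def mi {α β : Type*} [Fintype α] [Fintype β] (p : Ω → ℝ) (X : Ω → α) (Y : Ω → β) : ℝ :=
  ent p X + ent p Y - ent p (fun ω => (X ω, Y ω))

/-- Conditional mutual information `I(X ∧ Y | Z)`. -/
def cmi {α β γ : Type*} [Fintype α] [Fintype β] [Fintype γ]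
    (p : Ω → ℝ) (X : Ω → α) (Y : Ω → β) (Z : Ω → γ) : ℝ :=
  ent p (fun ω => (X ω, Z ω)) + ent p (fun ω => (Y ω, Z ω))
    - ent p (fun ω => ((X ω, Y ω), Z ω)) - ent p Z

/-- `p` is a probability mass function on `Ω`. -/
def IsPMF (p : Ω → ℝ) : Prop := (∀ ω, 0 ≤ p ω) ∧ ∑ ω, p ω = 1


/-! If `H(U|X) = H(U|Y) = 0`, then on the support of `p` the value of `U` is determined both by
`X` and by `Y`. If moreover `I(X ∧ Y | Z) = 0`, the equality case of Gibbs' inequality shows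
that the law of `((X, Y), Z)` charges every `((x, y), z)` for which `(x, z)` and `(y, z)` are
charged. So two outcomes `ω, ω'` with the same `Z` are linked by a third outcome sharing `X` with
`ω` and `Y` with `ω'`, and `U` takes the same value at all three: `U` is a function of `Z` on the
support, i.e. `H(U|Z) = 0`. The theorem is the cases `Z = g₁(X)` and `Z = g₂(Y)`. -/

theorem sub_le_mul_log_sub_log {a b : ℝ} (ha : 0 ≤ a) (hb : 0 ≤ b) (hab : 0 < a → 0 < b) :
    a - b ≤ a * (log a - log b) := by
  rcases ha.eq_or_lt with rfl | ha
  · simpa using hb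
  have hb := hab ha
  have hlog := one_sub_inv_le_log_of_pos (div_pos ha hb)
  rw [inv_div, log_div ha.ne' hb.ne'] at hlog
  calc a - b = a * (1 - b / a) := by field_simp
    _ ≤ a * (log a - log b) := mul_le_mul_of_nonneg_left hlog ha.le

/-- Equality case of Gibbs' inequality. -/
theorem pos_of_sum_mul_log_sub_log_eq_zero {ι : Type*} [Fintype ι] {a b : ι → ℝ}
    (ha : ∀ i, 0 ≤ a i) (hb : ∀ i, 0 ≤ b i) (hab : ∀ i, 0 < a i → 0 < b i)
    (hsum : ∑ i, b i ≤ ∑ i, a i) (h : ∑ i, a i * (log (a i) - log (b i)) = 0)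
    {i : ι} (hi : 0 < b i) : 0 < a i := by
  set f : ι → ℝ := fun j => a j * (log (a j) - log (b j)) - (a j - b j)
  have hf : ∀ j ∈ univ, 0 ≤ f j := fun j _ =>
    sub_nonneg.2 (sub_le_mul_log_sub_log (ha j) (hb j) (hab j))
  have hfsum : ∑ j, f j ≤ 0 := by
    simp only [f, sum_sub_distrib, h]
    linarith
  by_contra hai
  have hfi : f i = b i := by simp [f, le_antisymm (not_lt.1 hai) (ha i)]
  linarith [single_le_sum hf (mem_univ i)]

section

variable {α β γ : Type*} {p : Ω → ℝ}

theorem dist'_nonneg (hp : ∀ ω, 0 ≤ p ω) (X : Ω → α) (x : α) : 0 ≤ dist' p X x :=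
  sum_nonneg fun ω _ => by split_ifs <;> simp [hp ω]

theorem le_dist' (hp : ∀ ω, 0 ≤ p ω) (X : Ω → α) (ω : Ω) : p ω ≤ dist' p X (X ω) := by
  simpa [dist'] using single_le_sum (f := fun ω' => if X ω' = X ω then p ω' else 0)
    (fun ω' _ => by split_ifs <;> simp [hp ω']) (mem_univ ω)

theorem exists_of_dist'_pos {X : Ω → α} {x : α} (h : 0 < dist' p X x) :
    ∃ ω, 0 < p ω ∧ X ω = x := by
  contrapose! h
  exact sum_nonpos fun ω _ => by
    split_ifs with hx
    · exact not_lt.1 fun hpos => h ω hpos hx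
    · rfl

theorem sum_dist'_mul [Fintype α] (p : Ω → ℝ) (X : Ω → α) (φ : α → ℝ) :
    ∑ x, dist' p X x * φ x = ∑ ω, p ω * φ (X ω) := by
  simp only [dist', sum_mul, ite_mul, zero_mul]
  rw [sum_comm]
  simp

theorem sum_dist' [Fintype α] (p : Ω → ℝ) (X : Ω → α) : ∑ x, dist' p X x = ∑ ω, p ω := by
  simpa using sum_dist'_mul p X fun _ => 1

theorem ent_eq_sum [Fintype α] (p : Ω → ℝ) (X : Ω → α) :
    ent p X = -∑ ω, p ω * logb 2 (dist' p X (X ω)) := by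
  rw [ent, sum_dist'_mul p X fun x => logb 2 (dist' p X x)]

theorem dist'_prod_le (hp : ∀ ω, 0 ≤ p ω) (U : Ω → α) (Z : Ω → γ) (u : α) (c : γ) :
    dist' p (fun ω => (U ω, Z ω)) (u, c) ≤ dist' p Z c :=
  sum_le_sum fun ω _ => by
    by_cases hZ : Z ω = c <;> by_cases hU : U ω = u <;> simp [hZ, hU, hp ω]

theorem dist'_prod_eq_iff (hp : ∀ ω, 0 ≤ p ω) (U : Ω → α) (Z : Ω → γ) (u : α) (c : γ) :
    dist' p (fun ω => (U ω, Z ω)) (u, c) = dist' p Z c ↔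
      ∀ ω, 0 < p ω → Z ω = c → U ω = u := by
  have hdiff : dist' p Z c - dist' p (fun ω => (U ω, Z ω)) (u, c) =
      ∑ ω, if Z ω = c ∧ U ω ≠ u then p ω else 0 := by
    rw [dist', dist', ← sum_sub_distrib]
    refine sum_congr rfl fun ω _ => ?_
    by_cases hZ : Z ω = c <;> by_cases hU : U ω = u <;> simp [hZ, hU]
  rw [eq_comm, ← sub_eq_zero, hdiff,
    sum_eq_zero_iff_of_nonneg fun ω _ => by split_ifs <;> simp [hp ω]]
  refine forall_congr' fun ω => ?_
  by_cases hZ : Z ω = c <;> by_cases hU : U ω = u <;> simp [hZ, hU, (hp ω).lt_iff_ne']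

theorem condEnt_eq_sum [Fintype α] [Fintype γ] (p : Ω → ℝ) (U : Ω → α) (Z : Ω → γ) :
    condEnt p U Z = ∑ ω, p ω *
      (logb 2 (dist' p Z (Z ω)) - logb 2 (dist' p (fun ω => (U ω, Z ω)) (U ω, Z ω))) := by
  simp only [condEnt, ent_eq_sum, mul_sub, sum_sub_distrib]
  ring

theorem condEnt_eq_zero_iff [Fintype α] [Fintype γ] (hp : ∀ ω, 0 ≤ p ω) (U : Ω → α)
    (Z : Ω → γ) :
    condEnt p U Z = 0 ↔ ∀ ω ω', 0 < p ω → 0 < p ω' → Z ω = Z ω' → U ω = U ω' := by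
  have hterm : ∀ ω ∈ univ, 0 ≤ p ω *
      (logb 2 (dist' p Z (Z ω)) - logb 2 (dist' p (fun ω => (U ω, Z ω)) (U ω, Z ω))) := by
    intro ω _
    rcases (hp ω).eq_or_lt with hω | hω
    · simp [← hω]
    · have hr := hω.trans_le (le_dist' hp (fun ω => (U ω, Z ω)) ω)
      exact mul_nonneg hω.le <| sub_nonneg.2 <|
        logb_le_logb_of_le one_lt_two hr (dist'_prod_le hp U Z _ _)
  rw [condEnt_eq_sum, sum_eq_zero_iff_of_nonneg hterm]
  constructor
  · intro h ω ω' hω hω' hZ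
    have hr := hω.trans_le (le_dist' hp (fun ω => (U ω, Z ω)) ω)
    have hlog := sub_eq_zero.1 <| (mul_eq_zero.1 (h ω (mem_univ ω))).resolve_left hω.ne'
    have hrq := logb_injOn_pos one_lt_two (hr.trans_le (dist'_prod_le hp U Z _ _)) hr hlog
    exact ((dist'_prod_eq_iff hp U Z _ _).1 hrq.symm ω' hω' hZ.symm).symm
  · intro h ω _
    rcases (hp ω).eq_or_lt with hω | hω
    · simp [← hω]
    · rw [(dist'_prod_eq_iff hp U Z _ _).2 fun ω' hω' hZ => h ω' ω hω' hω hZ, sub_self,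
        mul_zero]

theorem sum_dist'_prod_left [Fintype α] (p : Ω → ℝ) (X : Ω → α) (Z : Ω → γ) (c : γ) :
    ∑ a, dist' p (fun ω => (X ω, Z ω)) (a, c) = dist' p Z c := by
  simp only [dist', Prod.mk.injEq]
  rw [sum_comm]
  refine sum_congr rfl fun ω _ => ?_
  by_cases hZ : Z ω = c <;> simp [hZ]

/-- The law `P(x, z) P(y, z) / P(z)` of `((X, Y), Z)` under which `X → Z → Y` is a Markov chain. -/
def markovDist' (p : Ω → ℝ) (X : Ω → α) (Y : Ω → β) (Z : Ω → γ) (t : (α × β) × γ) : ℝ :=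
  dist' p (fun ω => (X ω, Z ω)) (t.1.1, t.2) * dist' p (fun ω => (Y ω, Z ω)) (t.1.2, t.2) /
    dist' p Z t.2

theorem sum_markovDist' [Fintype α] [Fintype β] [Fintype γ] (p : Ω → ℝ) (X : Ω → α)
    (Y : Ω → β) (Z : Ω → γ) : ∑ t, markovDist' p X Y Z t = ∑ ω, p ω := by
  rw [← sum_dist' p Z, Fintype.sum_prod_type_right]
  refine sum_congr rfl fun c _ => ?_
  simp only [markovDist', Fintype.sum_prod_type, ← sum_div, ← sum_mul_sum,
    sum_dist'_prod_left, mul_self_div_self]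

theorem markovDist'_pos (hp : ∀ ω, 0 ≤ p ω) (X : Ω → α) (Y : Ω → β) {Z : Ω → γ} {ω ω' : Ω}
    (hω : 0 < p ω) (hω' : 0 < p ω') (hZ : Z ω = Z ω') :
    0 < markovDist' p X Y Z ((X ω, Y ω'), Z ω) := by
  have hXZ := hω.trans_le (le_dist' hp (fun ω => (X ω, Z ω)) ω)
  have hYZ := hω'.trans_le (le_dist' hp (fun ω => (Y ω, Z ω)) ω')
  rw [← hZ] at hYZ
  exact div_pos (mul_pos hXZ hYZ) (hω.trans_le (le_dist' hp Z ω))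

theorem cmi_eq_sum [Fintype α] [Fintype β] [Fintype γ] (hp : ∀ ω, 0 ≤ p ω) (X : Ω → α)
    (Y : Ω → β) (Z : Ω → γ) :
    cmi p X Y Z = (∑ t, dist' p (fun ω => ((X ω, Y ω), Z ω)) t *
      (log (dist' p (fun ω => ((X ω, Y ω), Z ω)) t) - log (markovDist' p X Y Z t))) / log 2 := by
  rw [sum_dist'_mul p _ fun t => log (dist' p (fun ω => ((X ω, Y ω), Z ω)) t) -
    log (markovDist' p X Y Z t), sum_div, cmi, ent_eq_sum, ent_eq_sum, ent_eq_sum, ent_eq_sum]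
  have hterm : ∀ ω, p ω * (log (dist' p (fun ω => ((X ω, Y ω), Z ω)) ((X ω, Y ω), Z ω)) -
      log (markovDist' p X Y Z ((X ω, Y ω), Z ω))) / log 2 =
      p ω * logb 2 (dist' p (fun ω => ((X ω, Y ω), Z ω)) ((X ω, Y ω), Z ω)) +
        p ω * logb 2 (dist' p Z (Z ω)) - p ω * logb 2 (dist' p (fun ω => (X ω, Z ω)) (X ω, Z ω)) -
        p ω * logb 2 (dist' p (fun ω => (Y ω, Z ω)) (Y ω, Z ω)) := by
    intro ω
    rcases (hp ω).eq_or_lt with hω | hω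
    · simp [← hω]
    have hXZ := hω.trans_le (le_dist' hp (fun ω => (X ω, Z ω)) ω)
    have hYZ := hω.trans_le (le_dist' hp (fun ω => (Y ω, Z ω)) ω)
    have hZ := hω.trans_le (le_dist' hp Z ω)
    rw [markovDist', log_div (mul_pos hXZ hYZ).ne' hZ.ne', log_mul hXZ.ne' hYZ.ne']
    simp only [logb]
    ring
  simp only [hterm, sum_add_distrib, sum_sub_distrib]
  ring

theorem exists_of_cmi_eq_zero [Fintype α] [Fintype β] [Fintype γ] (hp : ∀ ω, 0 ≤ p ω)
    {X : Ω → α} {Y : Ω → β} {Z : Ω → γ} (h : cmi p X Y Z = 0) {ω ω' : Ω}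
    (hω : 0 < p ω) (hω' : 0 < p ω') (hZ : Z ω = Z ω') :
    ∃ ω'', 0 < p ω'' ∧ X ω'' = X ω ∧ Y ω'' = Y ω' := by
  rw [cmi_eq_sum hp] at h
  have hpos := pos_of_sum_mul_log_sub_log_eq_zero (b := markovDist' p X Y Z)
    (dist'_nonneg hp _)
    (fun t => div_nonneg (mul_nonneg (dist'_nonneg hp _ _) (dist'_nonneg hp _ _))
      (dist'_nonneg hp _ _))
    (fun t ht => by
      obtain ⟨ω₀, hω₀, rfl⟩ := exists_of_dist'_pos ht
      exact markovDist'_pos hp X Y hω₀ hω₀ rfl)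
    (by rw [sum_dist', sum_markovDist'])
    ((div_eq_zero_iff.1 h).resolve_right (log_pos one_lt_two).ne')
    (markovDist'_pos hp X Y hω hω' hZ)
  obtain ⟨ω'', hω'', he⟩ := exists_of_dist'_pos hpos
  simp only [Prod.mk.injEq] at he
  exact ⟨ω'', hω'', he.1.1, he.1.2⟩

theorem condEnt_eq_zero_of_cmi_eq_zero {δ : Type*} [Fintype α] [Fintype β] [Fintype γ]
    [Fintype δ] (hp : ∀ ω, 0 ≤ p ω) {X : Ω → α} {Y : Ω → β} {Z : Ω → γ} {U : Ω → δ}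
    (hXYZ : cmi p X Y Z = 0) (hUX : condEnt p U X = 0) (hUY : condEnt p U Y = 0) :
    condEnt p U Z = 0 := by
  rw [condEnt_eq_zero_iff hp] at hUX hUY ⊢
  intro ω ω' hω hω' hZ
  obtain ⟨ω'', hω'', hX, hY⟩ := exists_of_cmi_eq_zero hp hXYZ hω hω' hZ
  exact (hUX ω'' ω hω'' hω hX).symm.trans (hUY ω'' ω' hω'' hω' hY)

end

/-- If `U` is a.s. a function of `X` and also of `Y` (`H(U|X) = H(U|Y) = 0`), and
`g₁(X)`, `g₂(Y)` are sufficient statistics, then `H(U|g₁(X)) = H(U|g₂(Y)) = 0`. -/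
theorem stmt7 {Ω 𝒳 𝒴 𝒰 γ₁ γ₂ : Type*} [Fintype Ω] [Fintype 𝒳] [Fintype 𝒴] [Fintype 𝒰]
    [Fintype γ₁] [Fintype γ₂]
    (p : Ω → ℝ) (hp : IsPMF p) (X : Ω → 𝒳) (Y : Ω → 𝒴) (U : Ω → 𝒰)
    (g₁ : 𝒳 → γ₁) (g₂ : 𝒴 → γ₂)
    (hg₁ : cmi p X Y (fun ω => g₁ (X ω)) = 0)
    (hg₂ : cmi p X Y (fun ω => g₂ (Y ω)) = 0)
    (hUX : condEnt p U X = 0) (hUY : condEnt p U Y = 0) :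
    condEnt p U (fun ω => g₁ (X ω)) = 0 ∧ condEnt p U (fun ω => g₂ (Y ω)) = 0 :=
  ⟨condEnt_eq_zero_of_cmi_eq_zero hp.1 hg₁ hUX hUY,
    condEnt_eq_zero_of_cmi_eq_zero hp.1 hg₂ hUX hUY⟩
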